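/- arXiv:2410.14327 — 2 statements merged into one kernel-verified Lean document; each statement's English description precedes it below -/
import Mathlib

section
/- Suppose X, X', Y are vectors in a field K³ with (A₀Y × A₁Y) · (X × X') = 0, where A₀, A₁ are 3×3 matrices. If X'ᵀ A₁ Y ≠ 0 and Xᵀ A₁ Y ≠ 0, then (Xᵀ A₀ Y)/(Xᵀ A₁ Y) = (X'ᵀ A₀ Y)/(X'ᵀ A₁ Y); i.e., the ratio I = (Xᵀ A₀ Y)/(Xᵀ A₁ Y) is invariant under the map X ↦ X'. -/
open Matrix

theorem invariant_ratio (K : Type*) [Field K]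
    (X X' Y : Fin 3 → K) (A₀ A₁ : Matrix (Fin 3) (Fin 3) K)
    (h : (crossProduct (A₀.mulVec Y) (A₁.mulVec Y)) ⬝ᵥ (crossProduct X X') = 0)
    (h₁ : X' ⬝ᵥ A₁.mulVec Y ≠ 0) (h₂ : X ⬝ᵥ A₁.mulVec Y ≠ 0) :
    (X ⬝ᵥ A₀.mulVec Y) / (X ⬝ᵥ A₁.mulVec Y)
      = (X' ⬝ᵥ A₀.mulVec Y) / (X' ⬝ᵥ A₁.mulVec Y) := by
  set a := A₀.mulVec Y
  set b := A₁.mulVec Y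
  rw [div_eq_div_iff h₂ h₁]
  simp only [crossProduct, dotProduct, Fin.sum_univ_three] at h ⊢
  simp only [LinearMap.mk₂_apply, Matrix.cons_val_zero, Matrix.cons_val_one,
    Matrix.head_cons, Matrix.cons_val_two, Matrix.tail_cons] at h
  linear_combination h
end

section
/- Let Y, Y' ∈ K³ and define ψ = (A₀ᵀ X) × (A₁ᵀ X) for a fixed X ∈ K³. Then ψ · (Y × Y') = (Xᵀ A₀ Y)(Xᵀ A₁ Y') − (Xᵀ A₁ Y)(Xᵀ A₀ Y'). Consequently, if ψ · (Y × Y') = 0 and Xᵀ A₁ Y ≠ 0 ≠ Xᵀ A₁ Y', then (Xᵀ A₀ Y)/(Xᵀ A₁ Y) = (Xᵀ A₀ Y')/(Xᵀ A₁ Y'), i.e., the invariant I = (Xᵀ A₀ Y)/(Xᵀ A₁ Y) is preserved by the second involution ι₂. -/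
open Matrix

theorem second_involution_invariant (K : Type*) [Field K]
    (A₀ A₁ : Matrix (Fin 3) (Fin 3) K) (X Y Y' : Fin 3 → K) :
    let ψ : Fin 3 → K := crossProduct (A₀ᵀ.mulVec X) (A₁ᵀ.mulVec X)
    (ψ ⬝ᵥ crossProduct Y Y'
        = (X ⬝ᵥ A₀.mulVec Y) * (X ⬝ᵥ A₁.mulVec Y')
          - (X ⬝ᵥ A₁.mulVec Y) * (X ⬝ᵥ A₀.mulVec Y')) ∧
      (ψ ⬝ᵥ crossProduct Y Y' = 0 → X ⬝ᵥ A₁.mulVec Y ≠ 0 → X ⬝ᵥ A₁.mulVec Y' ≠ 0 →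
        (X ⬝ᵥ A₀.mulVec Y) / (X ⬝ᵥ A₁.mulVec Y)
          = (X ⬝ᵥ A₀.mulVec Y') / (X ⬝ᵥ A₁.mulVec Y')) := by
  intro ψ
  have h : ψ ⬝ᵥ crossProduct Y Y'
      = (X ⬝ᵥ A₀.mulVec Y) * (X ⬝ᵥ A₁.mulVec Y')
        - (X ⬝ᵥ A₁.mulVec Y) * (X ⬝ᵥ A₀.mulVec Y') := by
    show crossProduct (A₀ᵀ.mulVec X) (A₁ᵀ.mulVec X) ⬝ᵥ crossProduct Y Y' = _
    simp only [crossProduct, dotProduct, mulVec, transpose_apply, Fin.sum_univ_three,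
      LinearMap.mk₂_apply, Matrix.cons_val_zero, Matrix.cons_val_one, Matrix.head_cons,
      Matrix.cons_val_two, Matrix.tail_cons]
    ring
  refine ⟨h, fun hz h1 h2 => ?_⟩
  rw [h] at hz
  rw [div_eq_div_iff h1 h2]
  linear_combination hz
end
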